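/- Let 1 ≤ q < ∞, let (Ω,Σ,ν) be a finite measure space, let λ be a finite non-atomic nonnegative measure on (Ω,Σ), let X be a normed space, and let S : L_q(Ω,ν) → X be a bounded linear operator. Let B ∈ Σ with ν(B) > 0, and let b > 0, δ > 0. Assume: (i) ‖S f‖ ≥ δ·λ(supp f) for every f ∈ L_∞(Ω) ⊆ L_q(Ω,ν) that is a sign on some measurable subset of B and is mean zero with respect to λ; (ii) |λ(C) − b·ν(C)| ≤ ε·ν(B)^{1/2} for every measurable C ⊆ B. Then there exists ε₀ > 0, depending only on δ, b, q, ν(B) and ‖S‖, such that if ε ≤ ε₀, then every sign x on B that is mean zero with respect to ν satisfies ‖S x‖ ≥ (1/2)·δ·b·ν(B) > 0. -/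

import Mathlib

open MeasureTheory ENNReal

/-- A *sign* on a measurable set `B` is a measurable function `x : Ω → ℝ` with
`x² = 𝟙_B`, i.e. `x` takes values `±1` on `B` and `0` off `B`. -/
def IsSignOn {Ω : Type*} [MeasurableSpace Ω] (x : Ω → ℝ) (B : Set Ω) : Prop :=
  Measurable x ∧ ∀ t, (x t) ^ 2 = B.indicator (fun _ => (1 : ℝ)) t

/-!
Since `x` is `ν`-mean zero, `ν {x = 1} = ν {x = -1}`, so the comparison of `λ` with `b ν` gives
`|∫ x dλ| ≤ 2 ε ν(B)^{1/2}`. By Sierpiński's theorem for the non-atomic `λ`, flipping `x` on a set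
`D ⊆ {x = ±1}` with `λ D = |∫ x dλ| / 2` yields a `λ`-mean zero sign `y` on `B`, so
`‖S y‖ ≥ δ λ(B) ≥ δ (b ν(B) - ε ν(B)^{1/2})`. The same comparison forces `b ν(D) ≤ 2 ε ν(B)^{1/2}`,
hence `‖S x - S y‖ ≤ 2 ‖S‖ ν(D)^{1/q}` is small once `ε` is.
-/

open Set

theorem exists_monotone_nearly_maximal {β : Type*} [Preorder β] (P : β → Prop) (m : β → ℝ≥0∞)
    {r : ℝ≥0∞} (hr : r ≠ ∞) (hm : ∀ x, P x → m x ≤ r) {x₀ : β} (hx₀ : P x₀) :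
    ∃ D : ℕ → β, Monotone D ∧ (∀ n, P (D n)) ∧
      ∀ n z, P z → D n ≤ z → m z ≤ m (D (n + 1)) + ((n : ℝ≥0∞) + 1)⁻¹ := by
  have step : ∀ (n : ℕ) x, P x → ∃ y, P y ∧ x ≤ y ∧
      ∀ z, P z → x ≤ z → m z ≤ m y + ((n : ℝ≥0∞) + 1)⁻¹ := by
    intro n x hx
    set s := ⨆ (z) (_ : P z ∧ x ≤ z), m z
    have hs : ∀ z, P z → x ≤ z → m z ≤ s := fun z hz hxz => le_iSup₂_of_le z ⟨hz, hxz⟩ le_rfl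
    rcases eq_or_ne s 0 with hs0 | hs0
    · exact ⟨x, hx, le_rfl, fun z hz hxz => (hs z hz hxz).trans (by simp [hs0])⟩
    have hsr : s ≠ ∞ := ne_top_of_le_ne_top hr (iSup₂_le fun z hz => hm z hz.1)
    obtain ⟨y, hsy⟩ :=
      lt_iSup_iff.1 (ENNReal.sub_lt_self (b := ((n : ℝ≥0∞) + 1)⁻¹) hsr hs0 (by simp))
    obtain ⟨⟨hy, hxy⟩, hsy⟩ := lt_iSup_iff.1 hsy
    exact ⟨y, hy, hxy, fun z hz hxz => (hs z hz hxz).trans (tsub_le_iff_right.1 hsy.le)⟩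
  choose! next hnextP hle hnext using step
  let D : ℕ → β := fun n => Nat.rec (motive := fun _ => β) x₀ next n
  have hD : ∀ n, P (D n) := fun n => by
    induction n with
    | zero => exact hx₀
    | succ n ih => exact hnextP n _ ih
  exact ⟨D, monotone_nat_of_le_succ fun n => hle n _ (hD n), hD,
    fun n z hz hDz => hnext n _ (hD n) z hz hDz⟩

section

variable {Ω : Type*} [MeasurableSpace Ω]

def IsNonAtomic (μ : Measure Ω) : Prop :=
  ∀ A : Set Ω, MeasurableSet A → 0 < μ A → ∃ C, C ⊆ A ∧ MeasurableSet C ∧ 0 < μ C ∧ μ C < μ A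

namespace IsNonAtomic

variable {μ : Measure Ω} {A : Set Ω}

theorem exists_subset_measure_le_half (hμ : IsNonAtomic μ) (hA : MeasurableSet A)
    (hApos : 0 < μ A) : ∃ C ⊆ A, MeasurableSet C ∧ 0 < μ C ∧ μ C ≤ μ A / 2 := by
  obtain ⟨C, hCA, hC, hCpos, hClt⟩ := hμ A hA hApos
  rcases le_or_gt (μ C) (μ A / 2) with hle | hgt
  · exact ⟨C, hCA, hC, hCpos, hle⟩
  have hdiff : μ (A \ C) = μ A - μ C :=
    measure_sdiff hCA hC.nullMeasurableSet (ne_top_of_lt hClt)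
  refine ⟨A \ C, sdiff_subset, hA.diff hC, by simpa [hdiff] using hClt, ?_⟩
  rw [hdiff, tsub_le_iff_right]
  calc μ A = μ A / 2 + μ A / 2 := (ENNReal.add_halves _).symm
    _ ≤ μ A / 2 + μ C := by gcongr

theorem exists_subset_measure_pos_le (hμ : IsNonAtomic μ) (hA : MeasurableSet A)
    (hApos : 0 < μ A) (hAfin : μ A ≠ ∞) {c : ℝ≥0∞} (hc : 0 < c) :
    ∃ C ⊆ A, MeasurableSet C ∧ 0 < μ C ∧ μ C ≤ c := by
  have halving : ∀ n : ℕ, ∃ C ⊆ A, MeasurableSet C ∧ 0 < μ C ∧ μ C ≤ μ A * 2⁻¹ ^ n := by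
    intro n
    induction n with
    | zero => exact ⟨A, subset_rfl, hA, hApos, by simp⟩
    | succ n ih =>
      obtain ⟨C, hCA, hC, hCpos, hCle⟩ := ih
      obtain ⟨C', hC'C, hC', hC'pos, hC'le⟩ := hμ.exists_subset_measure_le_half hC hCpos
      refine ⟨C', hC'C.trans hCA, hC', hC'pos, ?_⟩
      calc μ C' ≤ μ C / 2 := hC'le
        _ ≤ μ A * 2⁻¹ ^ n / 2 := by gcongr
        _ = μ A * 2⁻¹ ^ (n + 1) := by rw [pow_succ, ENNReal.div_eq_inv_mul]; ring
  obtain ⟨n, hn⟩ := ENNReal.exists_inv_two_pow_lt (ENNReal.div_pos hc.ne' hAfin).ne'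
  obtain ⟨C, hCA, hC, hCpos, hCle⟩ := halving n
  refine ⟨C, hCA, hC, hCpos, hCle.trans ?_⟩
  calc μ A * 2⁻¹ ^ n ≤ μ A * (c / μ A) := by gcongr
    _ = c := ENNReal.mul_div_cancel hApos.ne' hAfin

/-- Sierpiński's theorem. -/
theorem exists_subset_measure_eq (hμ : IsNonAtomic μ) (hA : MeasurableSet A) (hAfin : μ A ≠ ∞)
    {r : ℝ≥0∞} (hr : r ≤ μ A) : ∃ D ⊆ A, MeasurableSet D ∧ μ D = r := by
  obtain ⟨D, hmono, hD, hmax⟩ := exists_monotone_nearly_maximal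
    (fun E => E ⊆ A ∧ MeasurableSet E ∧ μ E ≤ r) μ (ne_top_of_le_ne_top hAfin hr)
    (fun _ h => h.2.2) ⟨empty_subset A, .empty, by simp⟩
  set U := ⋃ n, D n
  have hUA : U ⊆ A := iUnion_subset fun n => (hD n).1
  have hU : MeasurableSet U := .iUnion fun n => (hD n).2.1
  have hUr : μ U ≤ r := by
    rw [hmono.measure_iUnion]
    exact iSup_le fun n => (hD n).2.2
  have hUfin : μ U ≠ ∞ := ne_top_of_le_ne_top hAfin (measure_mono hUA)
  refine ⟨U, hUA, hU, hUr.antisymm (not_lt.1 fun hlt => ?_)⟩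
  have hgap : 0 < μ (A \ U) :=
    (tsub_pos_of_lt (hlt.trans_le hr)).trans_le (le_measure_sdiff ..)
  obtain ⟨C, hCA, hC, hCpos, hCle⟩ := hμ.exists_subset_measure_pos_le (hA.diff hU) hgap
    (measure_ne_top_of_subset sdiff_subset hAfin) (tsub_pos_of_lt hlt)
  have hUC : μ (U ∪ C) = μ U + μ C :=
    measure_union (disjoint_left.2 fun t htU htC => (hCA htC).2 htU) hC
  -- `U ∪ C` is admissible and contains every `D n`, so `μ C` is smaller than any `1 / (n + 1)`.
  have hCsmall : ∀ n : ℕ, μ C ≤ ((n : ℝ≥0∞) + 1)⁻¹ := by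
    intro n
    have hadm : μ (U ∪ C) ≤ r := by
      rw [hUC]
      calc μ U + μ C ≤ μ U + (r - μ U) := by gcongr
        _ = r := add_tsub_cancel_of_le hUr
    have h := hmax n (U ∪ C) ⟨union_subset hUA (hCA.trans sdiff_subset), hU.union hC, hadm⟩
      ((subset_iUnion D n).trans subset_union_left)
    rw [hUC] at h
    exact (ENNReal.add_le_add_iff_left hUfin).1
      (h.trans (add_le_add_left (measure_mono (subset_iUnion D (n + 1))) _))
  obtain ⟨n, hn⟩ := ENNReal.exists_inv_nat_lt hCpos.ne'
  exact (hn.trans_le ((hCsmall n).trans (ENNReal.inv_le_inv.2 le_self_add))).false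

end IsNonAtomic

namespace IsSignOn

variable {x : Ω → ℝ} {B : Set Ω}

theorem eq_one_or_eq_neg_one (hx : IsSignOn x B) {t : Ω} (ht : t ∈ B) : x t = 1 ∨ x t = -1 := by
  simpa [ht] using hx.2 t

theorem eq_zero (hx : IsSignOn x B) {t : Ω} (ht : t ∉ B) : x t = 0 := by
  simpa [ht] using hx.2 t

theorem support_eq (hx : IsSignOn x B) : Function.support x = B := by
  ext t
  by_cases ht : t ∈ B
  · rcases hx.eq_one_or_eq_neg_one ht with h | h <;> simp [ht, h]
  · simp [ht, hx.eq_zero ht]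

theorem neg (hx : IsSignOn x B) : IsSignOn (-x) B :=
  ⟨hx.1.neg, fun t => by simpa using hx.2 t⟩

theorem memLp (hx : IsSignOn x B) (p : ℝ≥0∞) (μ : Measure Ω) [IsFiniteMeasure μ] :
    MemLp x p μ := by
  refine .of_bound hx.1.aestronglyMeasurable 1 (.of_forall fun t => ?_)
  by_cases ht : t ∈ B
  · rcases hx.eq_one_or_eq_neg_one ht with h | h <;> simp [h]
  · simp [hx.eq_zero ht]

theorem eq_indicator_sub_indicator (hx : IsSignOn x B) :
    x = (x ⁻¹' {1}).indicator 1 - (x ⁻¹' {-1}).indicator 1 := by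
  ext t
  by_cases ht : t ∈ B
  · rcases hx.eq_one_or_eq_neg_one ht with h | h <;> simp [indicator, h] <;> norm_num
  · simp [indicator, hx.eq_zero ht]

theorem integral_eq (hx : IsSignOn x B) (μ : Measure Ω) [IsFiniteMeasure μ] :
    ∫ t, x t ∂μ = μ.real (x ⁻¹' {1}) - μ.real (x ⁻¹' {-1}) := by
  have h1 : MeasurableSet (x ⁻¹' {1}) := hx.1 (measurableSet_singleton _)
  have h2 : MeasurableSet (x ⁻¹' {-1}) := hx.1 (measurableSet_singleton _)
  conv_lhs => rw [hx.eq_indicator_sub_indicator]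
  simp only [Pi.sub_apply]
  rw [integral_sub ((integrable_const 1).indicator h1) ((integrable_const 1).indicator h2),
    integral_indicator_one h1, integral_indicator_one h2]

theorem preimage_subset (hx : IsSignOn x B) {a : ℝ} (ha : a ≠ 0) : x ⁻¹' {a} ⊆ B := by
  rw [← hx.support_eq]
  intro t ht
  simp_all

theorem sub_indicator_two {D : Set Ω} (hx : IsSignOn x B) (hD : MeasurableSet D)
    (hDx : ∀ t ∈ D, x t = 1) : IsSignOn (x - D.indicator fun _ => 2) B := by
  refine ⟨hx.1.sub (measurable_const.indicator hD), fun t => ?_⟩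
  by_cases ht : t ∈ D
  · have htB : t ∈ B := hx.preimage_subset one_ne_zero (hDx t ht)
    simp [ht, htB, hDx t ht]
    norm_num
  · simpa [ht] using hx.2 t

theorem abs_integral_le {ν μ : Measure Ω} [IsFiniteMeasure ν] [IsFiniteMeasure μ] {b η : ℝ}
    (hx : IsSignOn x B) (hxν : ∫ t, x t ∂ν = 0)
    (hC : ∀ C ⊆ B, MeasurableSet C → |μ.real C - b * ν.real C| ≤ η) :
    |∫ t, x t ∂μ| ≤ 2 * η := by
  have hP := hC _ (hx.preimage_subset one_ne_zero) (hx.1 (measurableSet_singleton _))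
  have hN := hC _ (hx.preimage_subset (a := -1) (by norm_num)) (hx.1 (measurableSet_singleton _))
  have hνPN : ν.real (x ⁻¹' {1}) = ν.real (x ⁻¹' {-1}) := by
    linarith [hx.integral_eq ν]
  rw [hνPN] at hP
  rw [hx.integral_eq μ, abs_le]
  rw [abs_le] at hP hN
  constructor <;> linarith [hP.1, hP.2, hN.1, hN.2]

theorem exists_measureReal_eq_half_integral {μ : Measure Ω} [IsFiniteMeasure μ]
    (hμ : IsNonAtomic μ) (hx : IsSignOn x B) (h : 0 ≤ ∫ t, x t ∂μ) :
    ∃ D, MeasurableSet D ∧ (∀ t ∈ D, x t = 1) ∧ 2 * μ.real D = ∫ t, x t ∂μ := by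
  have hle : (∫ t, x t ∂μ) / 2 ≤ μ.real (x ⁻¹' {1}) := by
    linarith [hx.integral_eq μ, measureReal_nonneg (μ := μ) (s := x ⁻¹' {-1})]
  obtain ⟨D, hDx, hD, hμD⟩ := hμ.exists_subset_measure_eq (hx.1 (measurableSet_singleton 1))
    (measure_ne_top _ _) (ENNReal.ofReal_le_of_le_toReal hle)
  refine ⟨D, hD, hDx, ?_⟩
  rw [measureReal_def, hμD, ENNReal.toReal_ofReal (by positivity)]
  ring

end IsSignOn

section Operator

variable {q : ℝ≥0∞} [Fact (1 ≤ q)] {ν μ : Measure Ω} [IsFiniteMeasure ν] [IsFiniteMeasure μ]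
  {X : Type*} [NormedAddCommGroup X] [NormedSpace ℝ X] {B : Set Ω} {b c η : ℝ}

theorem le_norm_apply_sign_add (hq : q ≠ ⊤) (hμ : IsNonAtomic μ) (S : Lp ℝ q ν →L[ℝ] X)
    (hb : 0 < b)
    (hS : ∀ y, IsSignOn y B → ∫ t, y t ∂μ = 0 → ∀ hy : MemLp y q ν, c ≤ ‖S (hy.toLp y)‖)
    (hC : ∀ C ⊆ B, MeasurableSet C → |μ.real C - b * ν.real C| ≤ η)
    {x : Ω → ℝ} (hx : IsSignOn x B) (hxν : ∫ t, x t ∂ν = 0) (hxLp : MemLp x q ν) :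
    c ≤ ‖S (hxLp.toLp x)‖ + 2 * ‖S‖ * (2 * η / b) ^ (1 / q.toReal) := by
  wlog hxμ : 0 ≤ ∫ t, x t ∂μ generalizing x
  · have h := this hx.neg (by simp [integral_neg, hxν]) hxLp.neg
      (by simp only [Pi.neg_apply, integral_neg]; linarith)
    rwa [MemLp.toLp_neg, map_neg, norm_neg] at h
  obtain ⟨D, hD, hDx, hμD⟩ := hx.exists_measureReal_eq_half_integral hμ hxμ
  have hDB : D ⊆ B := fun t ht => hx.preimage_subset one_ne_zero (hDx t ht)
  set y := x - D.indicator fun _ => (2 : ℝ)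
  have hy : IsSignOn y B := hx.sub_indicator_two hD hDx
  have hyμ : ∫ t, y t ∂μ = 0 := by
    simp only [y, Pi.sub_apply]
    rw [integral_sub (memLp_one_iff_integrable.1 (hx.memLp 1 μ))
      ((integrable_const _).indicator hD), integral_indicator_const _ hD, smul_eq_mul]
    linarith
  have hνD : ν.real D ≤ 2 * η / b := by
    have hD := abs_le.1 (hC D hDB hD)
    have hint := (abs_le.1 (hx.abs_integral_le hxν hC)).2
    rw [le_div_iff₀ hb]
    linarith [hD.1]
  have hdist : ‖hxLp.toLp x - (hy.memLp q ν).toLp y‖ = 2 * ν.real D ^ (1 / q.toReal) := by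
    rw [← MemLp.toLp_sub]
    have hxy : x - y = D.indicator fun _ => (2 : ℝ) := by simp [y]
    simp only [hxy]
    rw [show (_ : MemLp _ q ν).toLp _ = indicatorConstLp q hD (measure_ne_top ν D) (2 : ℝ)
      from rfl, norm_indicatorConstLp (zero_lt_one.trans_le Fact.out).ne' hq]
    norm_num
  calc c ≤ ‖S ((hy.memLp q ν).toLp y)‖ := hS y hy hyμ _
    _ ≤ ‖S (hxLp.toLp x)‖ + ‖S‖ * ‖hxLp.toLp x - (hy.memLp q ν).toLp y‖ := by
      refine (norm_le_norm_add_norm_sub (S (hxLp.toLp x)) _).trans ?_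
      rw [← map_sub]
      gcongr
      exact S.le_opNorm _
    _ ≤ ‖S (hxLp.toLp x)‖ + 2 * ‖S‖ * (2 * η / b) ^ (1 / q.toReal) := by
      rw [hdist, ← mul_assoc, mul_comm ‖S‖]
      gcongr

end Operator

end

/-- Suppose `S : L_q(ν) → X` is a bounded operator satisfying `‖S f‖ ≥ δ·λ(supp f)` for all
mean zero (w.r.t. `λ`) signs `f` on measurable subsets of `B`. Then there is `ε₀ > 0` such
that whenever `0 < ε ≤ ε₀` and `|λ C - b·ν C| ≤ ε·(ν B)^(1/2)` for all measurable `C ⊆ B`,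
every mean zero (w.r.t. `ν`) sign `x` on `B` satisfies `‖S x‖ ≥ (1/2)·δ·b·ν B > 0`. -/
theorem norm_apply_sign_ge {Ω : Type*} [MeasurableSpace Ω]
    (q : ℝ≥0∞) [Fact (1 ≤ q)] (hq2 : q ≠ ⊤)
    (nu lam : Measure Ω) [IsFiniteMeasure nu] [IsFiniteMeasure lam]
    (hna : ∀ A : Set Ω, MeasurableSet A → 0 < lam A →
      ∃ C, C ⊆ A ∧ MeasurableSet C ∧ 0 < lam C ∧ lam C < lam A)
    {X : Type*} [NormedAddCommGroup X] [NormedSpace ℝ X]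
    (S : Lp ℝ q nu →L[ℝ] X)
    (B : Set Ω) (hB : MeasurableSet B) (hBpos : 0 < nu B)
    (b δ : ℝ) (hb : 0 < b) (hδ : 0 < δ)
    (hS : ∀ (f : Ω → ℝ) (A : Set Ω), MeasurableSet A → A ⊆ B → IsSignOn f A →
      (∫ t, f t ∂lam) = 0 → ∀ hf : MemLp f q nu,
        δ * (lam (Function.support f)).toReal ≤ ‖S (hf.toLp f)‖) :
    ∃ ε₀ > (0 : ℝ), ∀ ε : ℝ, 0 < ε → ε ≤ ε₀ →
      (∀ C : Set Ω, C ⊆ B → MeasurableSet C →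
        |(lam C).toReal - b * (nu C).toReal| ≤ ε * (nu B).toReal ^ (1 / 2 : ℝ)) →
      ∀ x : Ω → ℝ, IsSignOn x B → (∫ t, x t ∂nu) = 0 → ∀ hx : MemLp x q nu,
        (1 / 2) * δ * b * (nu B).toReal ≤ ‖S (hx.toLp x)‖ ∧
          0 < (1 / 2) * δ * b * (nu B).toReal := by
  simp only [← measureReal_def] at hS ⊢
  set V := nu.real B
  have hV : 0 < V := ENNReal.toReal_pos hBpos.ne' (measure_ne_top nu B)
  have hpos : 0 < (1 / 2) * δ * b * V := by positivity
  -- the loss in the estimate below is a continuous function of `ε` vanishing at `0`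
  set loss : ℝ → ℝ := fun ε =>
    δ * (ε * V ^ (1 / 2 : ℝ)) + 2 * ‖S‖ * (2 * (ε * V ^ (1 / 2 : ℝ)) / b) ^ (1 / q.toReal)
  have hloss : Continuous loss := by fun_prop (disch := positivity)
  obtain ⟨ε₀, hε₀, hsmall⟩ := Metric.eventually_nhds_iff.1
    (hloss.continuousAt.eventually (gt_mem_nhds (show loss 0 < (1 / 2) * δ * b * V by
      simpa [loss, ENNReal.toReal_pos (zero_lt_one.trans_le Fact.out).ne' hq2 |>.ne'] using hpos)))
  refine ⟨ε₀ / 2, half_pos hε₀, fun ε hε hεε₀ hC x hx hxν hxLp => ⟨?_, hpos⟩⟩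
  have hlossε : loss ε < (1 / 2) * δ * b * V :=
    hsmall (by rw [Real.dist_0_eq_abs, abs_of_pos hε]; linarith)
  have hlamB : δ * (b * V - ε * V ^ (1 / 2 : ℝ)) ≤ δ * lam.real B := by
    gcongr
    linarith [(abs_le.1 (hC B subset_rfl hB)).1]
  have hSB : ∀ y, IsSignOn y B → ∫ t, y t ∂lam = 0 → ∀ hy : MemLp y q nu,
      δ * lam.real B ≤ ‖S (hy.toLp y)‖ := fun y hy hylam hyLp => by
    simpa [hy.support_eq] using hS y B hB subset_rfl hy hylam hyLp
  have hSx := le_norm_apply_sign_add hq2 hna S hb hSB hC hx hxν hxLp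
  simp only [loss] at hlossε
  linarith
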